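/- Theorem 3.1, unconditional energy stability part (fully discrete scheme): Let Δt > 0, M > 0, β > 0, α ∈ ℝ. Let Z^{n-1}, Z^n, Z^{n+1} be grid functions such that each Z^k and each Δ_h Z^k satisfies the discrete Neumann BC, let W^{n+1/2} be a grid function satisfying the discrete Neumann BC, let Ψ^n, Ψ^{n+1} be grid functions and R^n, R^{n+1} real numbers, and set Z^{n+1/2} = (Z^{n+1} + Z^n)/2, Ψ^{n+1/2} = (Ψ^{n+1} + Ψ^n)/2, R^{n+1/2} = (R^{n+1} + R^n)/2, Z̃^{n+1/2} = (3Z^n - Z^{n-1})/2. Assume E_1^h(Z̃^{n+1/2}) > 0 and that at all interior cells: (i) Ψ^{n+1} - Ψ^n + βΔt Ψ^{n+1/2} = MΔt Δ_h W^{n+1/2}; (ii) Δt Ψ^{n+1/2} = Z^{n+1} - Z^n; (iii) W^{n+1/2} = Δ_h^2 Z^{n+1/2} + 2Δ_h Z̃^{n+1/2} + α Z^{n+1/2} + (R^{n+1/2}/√(E_1^h(Z̃^{n+1/2}))) F'(Z̃^{n+1/2}); (iv) R^{n+1} - R^n = (1/(2√(E_1^h(Z̃^{n+1/2})))) (F'(Z̃^{n+1/2}),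 Z^{n+1} - Z^n)_m. Assume further that η^n, η^{n+1} are grid functions satisfying the discrete Neumann BC with -Δ_h η^k = Ψ^k at all interior cells for k ∈ {n, n+1}, and set η^{n+1/2} = (η^{n+1} + η^n)/2. Define the modified discrete pseudo energy Ẽ_d^k = (1/2)‖Δ_h Z^k‖_m^2 - ‖∇_h Z^k‖^2 + (α/2)‖Z^k‖_m^2 + (R^k)^2 + (1/(2M))‖∇_h η^k‖^2 + (1/2)‖∇_h(Z^k - Z^{k-1})‖^2. Then Ẽ_d^{n+1} - Ẽ_d^n ≤ -(β/M) Δt ‖∇_h η^{n+1/2}‖^2. -/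

import Mathlib

/-!
Pair the mobility equation with `η^{n+1/2}` and the chemical-potential equation with
`Z^{n+1} - Z^n`. Under the discrete Neumann condition summation by parts is exact
(`(Δ_h f, g)_m = -(∇_h f, ∇_h g)`), so every term becomes an energy difference: the
biharmonic and linear terms through `(a + b)(a - b) = a² - b²`, the SAV term through the update
of `R`, and the extrapolated term `2(∇_h Z̃, ∇_h(Z^{n+1} - Z^n))` through
`(3b - c)(a - b) = a² - b² - (a - b)²/2 + (b - c)²/2 - (a - 2b + c)²/2`.
The two pairings add up to
`Ẽ^{n+1} - Ẽ^n = -(β/M) Δt ‖∇_h η^{n+1/2}‖² - ½ ‖∇_h(Z^{n+1} - 2Z^n + Z^{n-1})‖²`.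
-/

open Finset

/-- Discrete inner product `(f,g)_m` over interior cells `i = 1,...,Nx`, `j = 1,...,Ny`. -/
noncomputable def innerM (Nx Ny : ℕ) (hx hy : ℝ) (f g : ℕ → ℕ → ℝ) : ℝ :=
  ∑ i ∈ Finset.Icc 1 Nx, ∑ j ∈ Finset.Icc 1 Ny, hx * hy * f i j * g i j

/-- Discrete inner product `(u,v)_x` for x-edge arrays; index `i` stands for `i + 1/2`. -/
noncomputable def innerX (Nx Ny : ℕ) (hx hy : ℝ) (u v : ℕ → ℕ → ℝ) : ℝ :=
  ∑ i ∈ Finset.Icc 1 (Nx - 1), ∑ j ∈ Finset.Icc 1 Ny, hx * hy * u i j * v i j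

/-- Discrete inner product `(u,v)_y` for y-edge arrays; index `j` stands for `j + 1/2`. -/
noncomputable def innerY (Nx Ny : ℕ) (hx hy : ℝ) (u v : ℕ → ℕ → ℝ) : ℝ :=
  ∑ i ∈ Finset.Icc 1 Nx, ∑ j ∈ Finset.Icc 1 (Ny - 1), hx * hy * u i j * v i j

/-- `[d_x g]_{i+1/2, j}`, stored at index `(i, j)`. -/
noncomputable def dX (hx : ℝ) (g : ℕ → ℕ → ℝ) : ℕ → ℕ → ℝ := fun i j => (g (i + 1) j - g i j) / hx

/-- `[d_y g]_{i, j+1/2}`, stored at index `(i, j)`. -/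
noncomputable def dY (hy : ℝ) (g : ℕ → ℕ → ℝ) : ℕ → ℕ → ℝ := fun i j => (g i (j + 1) - g i j) / hy

/-- `[D_x w]_{i,j} = (w_{i+1/2,j} - w_{i-1/2,j})/h_x` for an x-edge array `w`. -/
noncomputable def DX (hx : ℝ) (w : ℕ → ℕ → ℝ) : ℕ → ℕ → ℝ := fun i j => (w i j - w (i - 1) j) / hx

/-- `[D_y w]_{i,j} = (w_{i,j+1/2} - w_{i,j-1/2})/h_y` for a y-edge array `w`. -/
noncomputable def DY (hy : ℝ) (w : ℕ → ℕ → ℝ) : ℕ → ℕ → ℝ := fun i j => (w i j - w i (j - 1)) / hy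

/-- Five-point discrete Laplacian `[Δ_h g]_{i,j}` (meaningful at interior cells). -/
noncomputable def lapH (hx hy : ℝ) (g : ℕ → ℕ → ℝ) : ℕ → ℕ → ℝ := fun i j =>
  (g (i + 1) j - 2 * g i j + g (i - 1) j) / hx ^ 2 +
  (g i (j + 1) - 2 * g i j + g i (j - 1)) / hy ^ 2

/-- The discrete homogeneous Neumann boundary condition for a grid function. -/
noncomputable def NeumannBC (Nx Ny : ℕ) (g : ℕ → ℕ → ℝ) : Prop :=
  (∀ j ∈ Finset.Icc 1 Ny, g 0 j = g 1 j ∧ g (Nx + 1) j = g Nx j) ∧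
  (∀ i ∈ Finset.Icc 1 Nx, g i 0 = g i 1 ∧ g i (Ny + 1) = g i Ny)

/-- Extension of interior data to ghost cells via the discrete Neumann BC
(clamping of indices to the interior range). -/
noncomputable def extN (Nx Ny : ℕ) (u : ℕ → ℕ → ℝ) : ℕ → ℕ → ℝ := fun i j =>
  u (min (max i 1) Nx) (min (max j 1) Ny)

/-- `‖∇_h g‖² = (d_x g, d_x g)_x + (d_y g, d_y g)_y`. -/
noncomputable def gradSq (Nx Ny : ℕ) (hx hy : ℝ) (g : ℕ → ℕ → ℝ) : ℝ :=
  innerX Nx Ny hx hy (dX hx g) (dX hx g) + innerY Nx Ny hx hy (dY hy g) (dY hy g)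

/-- `Δ_h² g`, where `Δ_h g` is extended to ghost cells via its own Neumann BC. -/
noncomputable def lap2H (Nx Ny : ℕ) (hx hy : ℝ) (g : ℕ → ℕ → ℝ) : ℕ → ℕ → ℝ :=
  lapH hx hy (extN Nx Ny (lapH hx hy g))

/-- `Δ_h³ g`, where `Δ_h g`, `Δ_h² g` are extended to ghost cells via their own Neumann BC. -/
noncomputable def lap3H (Nx Ny : ℕ) (hx hy : ℝ) (g : ℕ → ℕ → ℝ) : ℕ → ℕ → ℝ :=
  lapH hx hy (extN Nx Ny (lap2H Nx Ny hx hy g))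

/-- Discrete energy `E_1^h(g) = Σ h_x h_y F(g_{ij})` with `F(s) = s⁴/4`. -/
noncomputable def E1h (Nx Ny : ℕ) (hx hy : ℝ) (g : ℕ → ℕ → ℝ) : ℝ :=
  ∑ i ∈ Finset.Icc 1 Nx, ∑ j ∈ Finset.Icc 1 Ny, hx * hy * (g i j ^ 4 / 4)

/-- The modified discrete pseudo energy
`Ẽ_d = (1/2)‖Δ_h Z‖_m² - ‖∇_h Z‖² + (α/2)‖Z‖_m² + R² + (1/(2M))‖∇_h η‖²
        + (1/2)‖∇_h(Z - Z_prev)‖²`. -/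
noncomputable def Ed (Nx Ny : ℕ) (hx hy M α : ℝ) (Z Zprev η : ℕ → ℕ → ℝ) (R : ℝ) : ℝ :=
  1 / 2 * innerM Nx Ny hx hy (lapH hx hy Z) (lapH hx hy Z)
    - gradSq Nx Ny hx hy Z + α / 2 * innerM Nx Ny hx hy Z Z + R ^ 2
    + 1 / (2 * M) * gradSq Nx Ny hx hy η
    + 1 / 2 * gradSq Nx Ny hx hy (fun i j => Z i j - Zprev i j)

noncomputable def gridInner (s t : Finset ℕ) (c : ℝ) (u v : ℕ → ℕ → ℝ) : ℝ :=
  ∑ i ∈ s, ∑ j ∈ t, c * u i j * v i j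

noncomputable def gradInner (Nx Ny : ℕ) (hx hy : ℝ) (f g : ℕ → ℕ → ℝ) : ℝ :=
  innerX Nx Ny hx hy (dX hx f) (dX hx g) + innerY Nx Ny hx hy (dY hy f) (dY hy g)

section GridInner

variable {s t : Finset ℕ} {c : ℝ}

theorem innerM_eq_gridInner (Nx Ny : ℕ) (hx hy : ℝ) (f g : ℕ → ℕ → ℝ) :
    innerM Nx Ny hx hy f g = gridInner (Icc 1 Nx) (Icc 1 Ny) (hx * hy) f g := rfl

theorem innerX_eq_gridInner (Nx Ny : ℕ) (hx hy : ℝ) (u v : ℕ → ℕ → ℝ) :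
    innerX Nx Ny hx hy u v = gridInner (Icc 1 (Nx - 1)) (Icc 1 Ny) (hx * hy) u v := rfl

theorem innerY_eq_gridInner (Nx Ny : ℕ) (hx hy : ℝ) (u v : ℕ → ℕ → ℝ) :
    innerY Nx Ny hx hy u v = gridInner (Icc 1 Nx) (Icc 1 (Ny - 1)) (hx * hy) u v := rfl

theorem gridInner_comm (u v : ℕ → ℕ → ℝ) : gridInner s t c u v = gridInner s t c v u :=
  sum_congr rfl fun _ _ => sum_congr rfl fun _ _ => by ring

theorem gridInner_congr_left {u u' : ℕ → ℕ → ℝ} (h : ∀ i ∈ s, ∀ j ∈ t, u i j = u' i j)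
    (v : ℕ → ℕ → ℝ) : gridInner s t c u v = gridInner s t c u' v :=
  sum_congr rfl fun i hi => sum_congr rfl fun j hj => by rw [h i hi j hj]

theorem gridInner_add_left (u v w : ℕ → ℕ → ℝ) :
    gridInner s t c (fun i j => u i j + v i j) w = gridInner s t c u w + gridInner s t c v w := by
  simp only [gridInner, ← sum_add_distrib]
  exact sum_congr rfl fun _ _ => sum_congr rfl fun _ _ => by ring

theorem gridInner_neg_left (u v : ℕ → ℕ → ℝ) :
    gridInner s t c (fun i j => -u i j) v = -gridInner s t c u v := by
  simp only [gridInner, ← sum_neg_distrib]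
  exact sum_congr rfl fun _ _ => sum_congr rfl fun _ _ => by ring

theorem gridInner_mul_left (r : ℝ) (u v : ℕ → ℕ → ℝ) :
    gridInner s t c (fun i j => r * u i j) v = r * gridInner s t c u v := by
  simp only [gridInner, mul_sum]
  exact sum_congr rfl fun _ _ => sum_congr rfl fun _ _ => by ring

theorem gridInner_self_nonneg (hc : 0 ≤ c) (u : ℕ → ℕ → ℝ) : 0 ≤ gridInner s t c u u :=
  sum_nonneg fun _ _ => sum_nonneg fun _ _ => by
    rw [mul_assoc]; exact mul_nonneg hc (mul_self_nonneg _)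

theorem gridInner_sub_avg (u v : ℕ → ℕ → ℝ) :
    gridInner s t c (fun i j => u i j - v i j) (fun i j => (u i j + v i j) / 2)
      = (gridInner s t c u u - gridInner s t c v v) / 2 := by
  simp only [gridInner, ← sum_sub_distrib, sum_div]
  exact sum_congr rfl fun _ _ => sum_congr rfl fun _ _ => by ring

theorem two_mul_gridInner_extrapolation (a b d : ℕ → ℕ → ℝ) :
    2 * gridInner s t c (fun i j => (3 * b i j - d i j) / 2) (fun i j => a i j - b i j)
      = gridInner s t c a a - gridInner s t c b b
        - gridInner s t c (fun i j => a i j - b i j) (fun i j => a i j - b i j) / 2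
        + gridInner s t c (fun i j => b i j - d i j) (fun i j => b i j - d i j) / 2
        - gridInner s t c (fun i j => a i j - 2 * b i j + d i j)
            (fun i j => a i j - 2 * b i j + d i j) / 2 := by
  simp only [gridInner, mul_sum, sum_div, ← sum_sub_distrib, ← sum_add_distrib]
  exact sum_congr rfl fun _ _ => sum_congr rfl fun _ _ => by ring

end GridInner

theorem sum_Icc_secondDiff_mul (f w : ℕ → ℝ) (n : ℕ) :
    ∑ i ∈ Icc 1 (n + 1), (f (i + 1) - 2 * f i + f (i - 1)) * w i
      = (f (n + 2) - f (n + 1)) * w (n + 1) - (f 1 - f 0) * w 1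
        - ∑ i ∈ Icc 1 n, (f (i + 1) - f i) * (w (i + 1) - w i) := by
  induction n with
  | zero =>
    simp only [zero_add, Icc_self, sum_singleton, Nat.reduceAdd, tsub_self, Order.lt_one_iff,
      Icc_eq_empty_of_lt, sum_empty, sub_zero]
    ring
  | succ n ih =>
    rw [sum_Icc_succ_top (by omega), ih, sum_Icc_succ_top (by omega)]
    simp only [Nat.add_sub_cancel]
    ring

theorem sum_Icc_secondDiff_div_mul_of_neumann (c h : ℝ) (f w : ℕ → ℝ) {N : ℕ}
    (h0 : f 0 = f 1) (hN : f (N + 1) = f N) :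
    ∑ i ∈ Icc 1 N, c * ((f (i + 1) - 2 * f i + f (i - 1)) / h ^ 2) * w i
      = -∑ i ∈ Icc 1 (N - 1), c * ((f (i + 1) - f i) / h) * ((w (i + 1) - w i) / h) := by
  obtain _ | n := N
  · simp
  have key := sum_Icc_secondDiff_mul f w n
  rw [hN, h0, sub_self, sub_self, zero_mul, zero_mul, sub_zero, zero_sub] at key
  calc ∑ i ∈ Icc 1 (n + 1), c * ((f (i + 1) - 2 * f i + f (i - 1)) / h ^ 2) * w i
      = c / h ^ 2 * ∑ i ∈ Icc 1 (n + 1), (f (i + 1) - 2 * f i + f (i - 1)) * w i := by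
        rw [mul_sum]; exact sum_congr rfl fun _ _ => by ring
    _ = _ := by
        rw [key, Nat.add_sub_cancel, mul_neg, mul_sum]
        exact congrArg _ (sum_congr rfl fun _ _ => by ring)

theorem innerM_lapH_eq_neg_gradInner {Nx Ny : ℕ} (hx hy : ℝ) {g : ℕ → ℕ → ℝ}
    (hg : NeumannBC Nx Ny g) (w : ℕ → ℕ → ℝ) :
    innerM Nx Ny hx hy (lapH hx hy g) w = -gradInner Nx Ny hx hy g w := by
  have hxx : ∑ i ∈ Icc 1 Nx, ∑ j ∈ Icc 1 Ny,
      hx * hy * ((g (i + 1) j - 2 * g i j + g (i - 1) j) / hx ^ 2) * w i j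
        = -innerX Nx Ny hx hy (dX hx g) (dX hx w) := by
    rw [sum_comm, innerX, sum_comm (s := Icc 1 (Nx - 1)), ← sum_neg_distrib]
    exact sum_congr rfl fun j hj => sum_Icc_secondDiff_div_mul_of_neumann _ _
      (fun i => g i j) (fun i => w i j) (hg.1 j hj).1 (hg.1 j hj).2
  have hyy : ∑ i ∈ Icc 1 Nx, ∑ j ∈ Icc 1 Ny,
      hx * hy * ((g i (j + 1) - 2 * g i j + g i (j - 1)) / hy ^ 2) * w i j
        = -innerY Nx Ny hx hy (dY hy g) (dY hy w) := by
    rw [innerY, ← sum_neg_distrib]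
    exact sum_congr rfl fun i hi =>
      sum_Icc_secondDiff_div_mul_of_neumann _ _ (g i) (w i) (hg.2 i hi).1 (hg.2 i hi).2
  rw [gradInner, neg_add, ← hxx, ← hyy, innerM, ← sum_add_distrib]
  refine sum_congr rfl fun _ _ => ?_
  rw [← sum_add_distrib]
  exact sum_congr rfl fun _ _ => by rw [lapH]; ring

theorem NeumannBC.map₂ {Nx Ny : ℕ} {f g : ℕ → ℕ → ℝ} (hf : NeumannBC Nx Ny f)
    (hg : NeumannBC Nx Ny g) (φ : ℝ → ℝ → ℝ) :
    NeumannBC Nx Ny (fun i j => φ (f i j) (g i j)) :=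
  ⟨fun j hj => ⟨congrArg₂ φ (hf.1 j hj).1 (hg.1 j hj).1, congrArg₂ φ (hf.1 j hj).2 (hg.1 j hj).2⟩,
   fun i hi => ⟨congrArg₂ φ (hf.2 i hi).1 (hg.2 i hi).1, congrArg₂ φ (hf.2 i hi).2 (hg.2 i hi).2⟩⟩

theorem neumannBC_extN (Nx Ny : ℕ) (u : ℕ → ℕ → ℝ) : NeumannBC Nx Ny (extN Nx Ny u) := by
  refine ⟨fun j _ => ⟨?_, ?_⟩, fun i _ => ⟨?_, ?_⟩⟩ <;> simp only [extN] <;> congr 1 <;> omega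

theorem extN_of_mem {Nx Ny i j : ℕ} (hi : i ∈ Icc 1 Nx) (hj : j ∈ Icc 1 Ny)
    (u : ℕ → ℕ → ℝ) : extN Nx Ny u i j = u i j := by
  rw [mem_Icc] at hi hj
  simp only [extN, max_eq_left hi.1, min_eq_left hi.2, max_eq_left hj.1, min_eq_left hj.2]

theorem gradInner_comm (Nx Ny : ℕ) (hx hy : ℝ) (f g : ℕ → ℕ → ℝ) :
    gradInner Nx Ny hx hy f g = gradInner Nx Ny hx hy g f :=
  congrArg₂ (· + ·) (gridInner_comm _ _) (gridInner_comm _ _)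

theorem innerM_lapH_comm {Nx Ny : ℕ} (hx hy : ℝ) {f g : ℕ → ℕ → ℝ}
    (hf : NeumannBC Nx Ny f) (hg : NeumannBC Nx Ny g) :
    innerM Nx Ny hx hy (lapH hx hy f) g = innerM Nx Ny hx hy f (lapH hx hy g) := by
  rw [innerM_lapH_eq_neg_gradInner hx hy hf, innerM_eq_gridInner, gridInner_comm,
    ← innerM_eq_gridInner, innerM_lapH_eq_neg_gradInner hx hy hg, gradInner_comm]

theorem innerM_lap2H {Nx Ny : ℕ} (hx hy : ℝ) (f : ℕ → ℕ → ℝ) {g : ℕ → ℕ → ℝ}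
    (hg : NeumannBC Nx Ny g) :
    innerM Nx Ny hx hy (lap2H Nx Ny hx hy f) g
      = innerM Nx Ny hx hy (lapH hx hy f) (lapH hx hy g) := by
  rw [lap2H, innerM_lapH_comm hx hy (neumannBC_extN Nx Ny _) hg, innerM_eq_gridInner,
    innerM_eq_gridInner, gridInner_congr_left fun i hi j hj => extN_of_mem hi hj _]

section Linearity

variable (f g h : ℕ → ℕ → ℝ)

theorem dX_sub (hx : ℝ) :
    dX hx (fun i j => f i j - g i j) = fun i j => dX hx f i j - dX hx g i j := by
  funext i j; simp only [dX]; ring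

theorem dX_avg (hx : ℝ) :
    dX hx (fun i j => (f i j + g i j) / 2) = fun i j => (dX hx f i j + dX hx g i j) / 2 := by
  funext i j; simp only [dX]; ring

theorem dX_extrapolation (hx : ℝ) :
    dX hx (fun i j => (3 * f i j - g i j) / 2)
      = fun i j => (3 * dX hx f i j - dX hx g i j) / 2 := by
  funext i j; simp only [dX]; ring

theorem dX_secondDiff (hx : ℝ) :
    dX hx (fun i j => f i j - 2 * g i j + h i j)
      = fun i j => dX hx f i j - 2 * dX hx g i j + dX hx h i j := by
  funext i j; simp only [dX]; ring

theorem dY_sub (hy : ℝ) :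
    dY hy (fun i j => f i j - g i j) = fun i j => dY hy f i j - dY hy g i j := by
  funext i j; simp only [dY]; ring

theorem dY_avg (hy : ℝ) :
    dY hy (fun i j => (f i j + g i j) / 2) = fun i j => (dY hy f i j + dY hy g i j) / 2 := by
  funext i j; simp only [dY]; ring

theorem dY_extrapolation (hy : ℝ) :
    dY hy (fun i j => (3 * f i j - g i j) / 2)
      = fun i j => (3 * dY hy f i j - dY hy g i j) / 2 := by
  funext i j; simp only [dY]; ring

theorem dY_secondDiff (hy : ℝ) :
    dY hy (fun i j => f i j - 2 * g i j + h i j)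
      = fun i j => dY hy f i j - 2 * dY hy g i j + dY hy h i j := by
  funext i j; simp only [dY]; ring

theorem lapH_sub (hx hy : ℝ) :
    lapH hx hy (fun i j => f i j - g i j) = fun i j => lapH hx hy f i j - lapH hx hy g i j := by
  funext i j; simp only [lapH]; ring

theorem lapH_avg (hx hy : ℝ) :
    lapH hx hy (fun i j => (f i j + g i j) / 2)
      = fun i j => (lapH hx hy f i j + lapH hx hy g i j) / 2 := by
  funext i j; simp only [lapH]; ring

end Linearity

theorem gradSq_nonneg (Nx Ny : ℕ) {hx hy : ℝ} (hhx : 0 ≤ hx) (hhy : 0 ≤ hy) (g : ℕ → ℕ → ℝ) :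
    0 ≤ gradSq Nx Ny hx hy g :=
  add_nonneg (gridInner_self_nonneg (mul_nonneg hhx hhy) _)
    (gridInner_self_nonneg (mul_nonneg hhx hhy) _)

section Gradient

variable (Nx Ny : ℕ) (hx hy : ℝ)

theorem gradInner_sub_avg (f g : ℕ → ℕ → ℝ) :
    gradInner Nx Ny hx hy (fun i j => f i j - g i j) (fun i j => (f i j + g i j) / 2)
      = (gradSq Nx Ny hx hy f - gradSq Nx Ny hx hy g) / 2 := by
  simp only [gradInner, gradSq, dX_sub, dX_avg, dY_sub, dY_avg, innerX_eq_gridInner,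
    innerY_eq_gridInner, gridInner_sub_avg]
  ring

theorem two_mul_gradInner_extrapolation (a b d : ℕ → ℕ → ℝ) :
    2 * gradInner Nx Ny hx hy (fun i j => (3 * b i j - d i j) / 2) (fun i j => a i j - b i j)
      = gradSq Nx Ny hx hy a - gradSq Nx Ny hx hy b
        - gradSq Nx Ny hx hy (fun i j => a i j - b i j) / 2
        + gradSq Nx Ny hx hy (fun i j => b i j - d i j) / 2
        - gradSq Nx Ny hx hy (fun i j => a i j - 2 * b i j + d i j) / 2 := by
  simp only [gradInner, gradSq, dX_extrapolation, dX_sub, dX_secondDiff, dY_extrapolation,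
    dY_sub, dY_secondDiff, innerX_eq_gridInner, innerY_eq_gridInner, mul_add,
    two_mul_gridInner_extrapolation]
  ring

end Gradient

theorem innerM_eq_gradInner_of_neg_lapH_eq {Nx Ny : ℕ} {hx hy : ℝ} {η Ψ : ℕ → ℕ → ℝ}
    (hη : NeumannBC Nx Ny η)
    (hηΨ : ∀ i ∈ Icc 1 Nx, ∀ j ∈ Icc 1 Ny, -lapH hx hy η i j = Ψ i j) (w : ℕ → ℕ → ℝ) :
    innerM Nx Ny hx hy Ψ w = gradInner Nx Ny hx hy η w := by
  rw [innerM_eq_gridInner, ← gridInner_congr_left hηΨ, gridInner_neg_left, ← innerM_eq_gridInner,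
    innerM_lapH_eq_neg_gradInner hx hy hη, neg_neg]

theorem eta_energy_balance {Nx Ny : ℕ} {hx hy Δt M β : ℝ} {W Ψn Ψp ηn ηp Zn Zp : ℕ → ℕ → ℝ}
    (hW : NeumannBC Nx Ny W) (hηn : NeumannBC Nx Ny ηn) (hηp : NeumannBC Nx Ny ηp)
    (heq1 : ∀ i ∈ Icc 1 Nx, ∀ j ∈ Icc 1 Ny,
      Ψp i j - Ψn i j + β * Δt * ((Ψp i j + Ψn i j) / 2) = M * Δt * lapH hx hy W i j)
    (heq2 : ∀ i ∈ Icc 1 Nx, ∀ j ∈ Icc 1 Ny, Δt * ((Ψp i j + Ψn i j) / 2) = Zp i j - Zn i j)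
    (hηΨn : ∀ i ∈ Icc 1 Nx, ∀ j ∈ Icc 1 Ny, -lapH hx hy ηn i j = Ψn i j)
    (hηΨp : ∀ i ∈ Icc 1 Nx, ∀ j ∈ Icc 1 Ny, -lapH hx hy ηp i j = Ψp i j) :
    (gradSq Nx Ny hx hy ηp - gradSq Nx Ny hx hy ηn) / 2
        + β * Δt * gradSq Nx Ny hx hy (fun i j => (ηp i j + ηn i j) / 2)
      = -M * innerM Nx Ny hx hy W (fun i j => Zp i j - Zn i j) := by
  set ηh := fun i j => (ηp i j + ηn i j) / 2
  have hηh : NeumannBC Nx Ny ηh := hηp.map₂ hηn fun a b => (a + b) / 2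
  have hΨh : ∀ i ∈ Icc 1 Nx, ∀ j ∈ Icc 1 Ny, -lapH hx hy ηh i j = (Ψp i j + Ψn i j) / 2 :=
    fun i hi j hj => by
      rw [lapH_avg, ← hηΨp i hi j hj, ← hηΨn i hi j hj]; ring
  have hΨd : ∀ i ∈ Icc 1 Nx, ∀ j ∈ Icc 1 Ny,
      -lapH hx hy (fun i j => ηp i j - ηn i j) i j = Ψp i j - Ψn i j := fun i hi j hj => by
    rw [lapH_sub, ← hηΨp i hi j hj, ← hηΨn i hi j hj]; ring
  have hincrement : innerM Nx Ny hx hy (fun i j => Ψp i j - Ψn i j) ηh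
      = (gradSq Nx Ny hx hy ηp - gradSq Nx Ny hx hy ηn) / 2 := by
    rw [innerM_eq_gradInner_of_neg_lapH_eq (hηp.map₂ hηn _) hΨd, gradInner_sub_avg]
  have hdissipation : innerM Nx Ny hx hy (fun i j => (Ψp i j + Ψn i j) / 2) ηh
      = gradSq Nx Ny hx hy ηh :=
    innerM_eq_gradInner_of_neg_lapH_eq hηh hΨh ηh
  have hmobility : Δt * innerM Nx Ny hx hy (lapH hx hy W) ηh
      = -innerM Nx Ny hx hy W (fun i j => Zp i j - Zn i j) := by
    rw [innerM_lapH_eq_neg_gradInner hx hy hW, gradInner_comm,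
      ← innerM_eq_gradInner_of_neg_lapH_eq hηh hΨh W, innerM_eq_gridInner, innerM_eq_gridInner,
      gridInner_comm W, ← gridInner_congr_left heq2, gridInner_mul_left]
    ring
  have hscheme : innerM Nx Ny hx hy (fun i j => Ψp i j - Ψn i j) ηh
        + β * Δt * innerM Nx Ny hx hy (fun i j => (Ψp i j + Ψn i j) / 2) ηh
      = M * Δt * innerM Nx Ny hx hy (lapH hx hy W) ηh := by
    simp only [innerM_eq_gridInner, ← gridInner_mul_left, ← gridInner_add_left]
    exact gridInner_congr_left heq1 ηh
  rw [← hincrement, ← hdissipation]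
  linear_combination hscheme + M * hmobility

theorem innerM_lap2H_avg_sub {Nx Ny : ℕ} (hx hy : ℝ) {f g : ℕ → ℕ → ℝ}
    (hf : NeumannBC Nx Ny f) (hg : NeumannBC Nx Ny g) :
    innerM Nx Ny hx hy (lap2H Nx Ny hx hy fun i j => (f i j + g i j) / 2)
        (fun i j => f i j - g i j)
      = (innerM Nx Ny hx hy (lapH hx hy f) (lapH hx hy f)
          - innerM Nx Ny hx hy (lapH hx hy g) (lapH hx hy g)) / 2 := by
  rw [innerM_lap2H hx hy _ (hf.map₂ hg (· - ·)), lapH_avg, lapH_sub, innerM_eq_gridInner,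
    gridInner_comm, gridInner_sub_avg]
  rfl

theorem innerM_chemPot_increment {Nx Ny : ℕ} {hx hy α Rn Rp S : ℝ}
    {Zm Zn Zp W q : ℕ → ℕ → ℝ}
    (hZm : NeumannBC Nx Ny Zm) (hZn : NeumannBC Nx Ny Zn) (hZp : NeumannBC Nx Ny Zp)
    (heq3 : ∀ i ∈ Icc 1 Nx, ∀ j ∈ Icc 1 Ny,
      W i j = lap2H Nx Ny hx hy (fun a b => (Zp a b + Zn a b) / 2) i j
        + 2 * lapH hx hy (fun a b => (3 * Zn a b - Zm a b) / 2) i j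
        + α * ((Zp i j + Zn i j) / 2) + (Rp + Rn) / 2 / S * q i j)
    (heq4 : Rp - Rn = 1 / (2 * S) * innerM Nx Ny hx hy q (fun i j => Zp i j - Zn i j)) :
    innerM Nx Ny hx hy W (fun i j => Zp i j - Zn i j)
      = (innerM Nx Ny hx hy (lapH hx hy Zp) (lapH hx hy Zp)
          - innerM Nx Ny hx hy (lapH hx hy Zn) (lapH hx hy Zn)) / 2
        - (gradSq Nx Ny hx hy Zp - gradSq Nx Ny hx hy Zn)
        + gradSq Nx Ny hx hy (fun i j => Zp i j - Zn i j) / 2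
        - gradSq Nx Ny hx hy (fun i j => Zn i j - Zm i j) / 2
        + gradSq Nx Ny hx hy (fun i j => Zp i j - 2 * Zn i j + Zm i j) / 2
        + α / 2 * (innerM Nx Ny hx hy Zp Zp - innerM Nx Ny hx hy Zn Zn)
        + (Rp ^ 2 - Rn ^ 2) := by
  set δZ := fun i j => Zp i j - Zn i j
  have hbiharmonic := innerM_lap2H_avg_sub hx hy hZp hZn
  have hextrapolated : innerM Nx Ny hx hy
      (lapH hx hy fun a b => (3 * Zn a b - Zm a b) / 2) δZ
        = -gradInner Nx Ny hx hy (fun a b => (3 * Zn a b - Zm a b) / 2) δZ :=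
    innerM_lapH_eq_neg_gradInner hx hy (hZn.map₂ hZm fun a b => (3 * a - b) / 2) δZ
  have hlinear : innerM Nx Ny hx hy (fun i j => (Zp i j + Zn i j) / 2) δZ
      = (innerM Nx Ny hx hy Zp Zp - innerM Nx Ny hx hy Zn Zn) / 2 := by
    rw [innerM_eq_gridInner, gridInner_comm, gridInner_sub_avg]; rfl
  rw [innerM_eq_gridInner, gridInner_congr_left heq3, gridInner_add_left, gridInner_add_left,
    gridInner_add_left, gridInner_mul_left, gridInner_mul_left, gridInner_mul_left]
  simp only [← innerM_eq_gridInner]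
  rw [hbiharmonic, hextrapolated, hlinear]
  linear_combination -(Rp + Rn) * heq4
    - two_mul_gradInner_extrapolation Nx Ny hx hy Zp Zn Zm

theorem fully_discrete_energy_stability_general
    (Nx Ny : ℕ)
    (hx hy : ℝ) (hhx : 0 < hx) (hhy : 0 < hy)
    (Δt M β α : ℝ) (hM : 0 < M)
    (Zm Zn Zp W Ψn Ψp ηn ηp : ℕ → ℕ → ℝ) (Rn Rp : ℝ)
    (hZm : NeumannBC Nx Ny Zm) (hZn : NeumannBC Nx Ny Zn) (hZp : NeumannBC Nx Ny Zp)
    (hW : NeumannBC Nx Ny W)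
    (heq1 : ∀ i ∈ Finset.Icc 1 Nx, ∀ j ∈ Finset.Icc 1 Ny,
      Ψp i j - Ψn i j + β * Δt * ((Ψp i j + Ψn i j) / 2) = M * Δt * lapH hx hy W i j)
    (heq2 : ∀ i ∈ Finset.Icc 1 Nx, ∀ j ∈ Finset.Icc 1 Ny,
      Δt * ((Ψp i j + Ψn i j) / 2) = Zp i j - Zn i j)
    (heq3 : ∀ i ∈ Finset.Icc 1 Nx, ∀ j ∈ Finset.Icc 1 Ny,
      W i j = lap2H Nx Ny hx hy (fun a b => (Zp a b + Zn a b) / 2) i j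
        + 2 * lapH hx hy (fun a b => (3 * Zn a b - Zm a b) / 2) i j
        + α * ((Zp i j + Zn i j) / 2)
        + (Rp + Rn) / 2 /
            Real.sqrt (E1h Nx Ny hx hy (fun a b => (3 * Zn a b - Zm a b) / 2)) *
            ((3 * Zn i j - Zm i j) / 2) ^ 3)
    (heq4 : Rp - Rn =
      1 / (2 * Real.sqrt (E1h Nx Ny hx hy (fun a b => (3 * Zn a b - Zm a b) / 2))) *
        innerM Nx Ny hx hy (fun i j => ((3 * Zn i j - Zm i j) / 2) ^ 3)
          (fun i j => Zp i j - Zn i j))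
    (hηn : NeumannBC Nx Ny ηn) (hηp : NeumannBC Nx Ny ηp)
    (hηΨn : ∀ i ∈ Finset.Icc 1 Nx, ∀ j ∈ Finset.Icc 1 Ny, -lapH hx hy ηn i j = Ψn i j)
    (hηΨp : ∀ i ∈ Finset.Icc 1 Nx, ∀ j ∈ Finset.Icc 1 Ny, -lapH hx hy ηp i j = Ψp i j) :
    Ed Nx Ny hx hy M α Zp Zn ηp Rp - Ed Nx Ny hx hy M α Zn Zm ηn Rn ≤
      -(β / M) * Δt * gradSq Nx Ny hx hy (fun i j => (ηp i j + ηn i j) / 2) := by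
  have hη := eta_energy_balance hW hηn hηp heq1 heq2 hηΨn hηΨp
  have hμ := innerM_chemPot_increment hZm hZn hZp heq3 heq4
  have hη' : 1 / (2 * M) * (gradSq Nx Ny hx hy ηp - gradSq Nx Ny hx hy ηn)
      = -(β / M) * Δt * gradSq Nx Ny hx hy (fun i j => (ηp i j + ηn i j) / 2)
        - innerM Nx Ny hx hy W (fun i j => Zp i j - Zn i j) := by
    field_simp
    linear_combination 2 * hη
  have hsecondDiff := gradSq_nonneg Nx Ny hhx.le hhy.le fun i j => Zp i j - 2 * Zn i j + Zm i j
  rw [Ed, Ed]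
  linarith

/-- Theorem 3.1, unconditional energy stability part (fully discrete scheme):
`Ẽ_d^{n+1} - Ẽ_dⁿ ≤ -(β/M) Δt ‖∇_h η^{n+1/2}‖²`. -/
theorem fully_discrete_energy_stability
    (Nx Ny : ℕ) (hNx : 1 ≤ Nx) (hNy : 1 ≤ Ny)
    (hx hy : ℝ) (hhx : 0 < hx) (hhy : 0 < hy)
    (Δt M β α : ℝ) (hΔt : 0 < Δt) (hM : 0 < M) (hβ : 0 < β)
    (Zm Zn Zp W Ψn Ψp ηn ηp : ℕ → ℕ → ℝ) (Rn Rp : ℝ)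
    (hZm : NeumannBC Nx Ny Zm) (hZn : NeumannBC Nx Ny Zn) (hZp : NeumannBC Nx Ny Zp)
    (hΔZm : NeumannBC Nx Ny (extN Nx Ny (lapH hx hy Zm)))
    (hΔZn : NeumannBC Nx Ny (extN Nx Ny (lapH hx hy Zn)))
    (hΔZp : NeumannBC Nx Ny (extN Nx Ny (lapH hx hy Zp)))
    (hW : NeumannBC Nx Ny W)
    (hE1 : 0 < E1h Nx Ny hx hy (fun i j => (3 * Zn i j - Zm i j) / 2))
    (heq1 : ∀ i ∈ Finset.Icc 1 Nx, ∀ j ∈ Finset.Icc 1 Ny,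
      Ψp i j - Ψn i j + β * Δt * ((Ψp i j + Ψn i j) / 2) = M * Δt * lapH hx hy W i j)
    (heq2 : ∀ i ∈ Finset.Icc 1 Nx, ∀ j ∈ Finset.Icc 1 Ny,
      Δt * ((Ψp i j + Ψn i j) / 2) = Zp i j - Zn i j)
    (heq3 : ∀ i ∈ Finset.Icc 1 Nx, ∀ j ∈ Finset.Icc 1 Ny,
      W i j = lap2H Nx Ny hx hy (fun a b => (Zp a b + Zn a b) / 2) i j
        + 2 * lapH hx hy (fun a b => (3 * Zn a b - Zm a b) / 2) i j
        + α * ((Zp i j + Zn i j) / 2)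
        + (Rp + Rn) / 2 /
            Real.sqrt (E1h Nx Ny hx hy (fun a b => (3 * Zn a b - Zm a b) / 2)) *
            ((3 * Zn i j - Zm i j) / 2) ^ 3)
    (heq4 : Rp - Rn =
      1 / (2 * Real.sqrt (E1h Nx Ny hx hy (fun a b => (3 * Zn a b - Zm a b) / 2))) *
        innerM Nx Ny hx hy (fun i j => ((3 * Zn i j - Zm i j) / 2) ^ 3)
          (fun i j => Zp i j - Zn i j))
    (hηn : NeumannBC Nx Ny ηn) (hηp : NeumannBC Nx Ny ηp)
    (hηΨn : ∀ i ∈ Finset.Icc 1 Nx, ∀ j ∈ Finset.Icc 1 Ny, -lapH hx hy ηn i j = Ψn i j)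
    (hηΨp : ∀ i ∈ Finset.Icc 1 Nx, ∀ j ∈ Finset.Icc 1 Ny, -lapH hx hy ηp i j = Ψp i j) :
    Ed Nx Ny hx hy M α Zp Zn ηp Rp - Ed Nx Ny hx hy M α Zn Zm ηn Rn ≤
      -(β / M) * Δt * gradSq Nx Ny hx hy (fun i j => (ηp i j + ηn i j) / 2) :=
  fully_discrete_energy_stability_general Nx Ny hx hy hhx hhy Δt M β α hM Zm Zn Zp W Ψn Ψp ηn ηp Rn
    Rp hZm hZn hZp hW heq1 heq2 heq3 heq4 hηn hηp hηΨn hηΨp
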